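/- Let G be a totally disconnected locally compact Hausdorff topological group, g ∈ G, and U a compact open subgroup of G. Define L̃_U = {x ∈ G : x ∈ gⁿUg⁻ⁿ for all but finitely many n ∈ ℤ}. Then L̃_U is a subgroup of G, it is normalised by g (i.e., g L̃_U g⁻¹ = L̃_U), and it is relatively compact (its closure in G is compact). -/

import Mathlib

open MeasureTheory Pointwise

variable {G : Type*}

/-- The conjugate subgroup `gUg⁻¹`. -/
def conjSubgroup [Group G] (g : G) (U : Subgroup G) : Subgroup G :=
  U.map (MulAut.conj g).toMonoidHom

/-- A subgroup is compact open if its carrier set is compact and open. -/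
def Subgroup.IsCompactOpen [Group G] [TopologicalSpace G] (U : Subgroup G) : Prop :=
  IsCompact (U : Set G) ∧ IsOpen (U : Set G)

/-!
Write `A_n = gⁿUg⁻ⁿ` and `X_m = ⋂_{n ∉ (-m, 0)} A_n`, an increasing family of compact subgroups
of `U`. Their images in the finite set `U A_{-1} / A_{-1}` stabilise from some `k` on, so
`X_{m+1} ⊆ X_k · g⁻¹X_m g` for `m ≥ k`, and by iteration `X_{m+j} ⊆ X_{k+j} · g⁻ʲX_m gʲ`.
An element `x ∈ L̃_U` lies in `A_n` for `|n| ≥ N`, so `g⁻ᴺxgᴺ ∈ X_{2N}`; unrolling this twice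
puts `x` in `U · gᵏX_{2k}g⁻ᵏ · U`, a compact set that does not depend on `x`.
-/

section ConjSubgroup

variable [Group G]

theorem mem_conjSubgroup {h x : G} {U : Subgroup G} :
    x ∈ conjSubgroup h U ↔ h⁻¹ * x * h ∈ U := by
  simp only [conjSubgroup, Subgroup.mem_map, MulEquiv.coe_toMonoidHom, MulAut.conj_apply]
  constructor
  · rintro ⟨u, hu, rfl⟩
    simpa [mul_assoc] using hu
  · exact fun hx => ⟨h⁻¹ * x * h, hx, by group⟩

theorem conjSubgroup_one (U : Subgroup G) : conjSubgroup 1 U = U := by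
  ext x
  simp [mem_conjSubgroup]

theorem conj_mem_conjSubgroup_iff {h k x : G} {U : Subgroup G} :
    h⁻¹ * x * h ∈ conjSubgroup k U ↔ x ∈ conjSubgroup (h * k) U := by
  simp only [mem_conjSubgroup, mul_inv_rev, mul_assoc]

theorem zpow_conj_mem_conjSubgroup_zpow_iff {g x : G} {U : Subgroup G} {t n : ℤ} :
    (g ^ t)⁻¹ * x * g ^ t ∈ conjSubgroup (g ^ n) U ↔ x ∈ conjSubgroup (g ^ (t + n)) U := by
  rw [conj_mem_conjSubgroup_iff, zpow_add]

theorem coe_conjSubgroup (h : G) (U : Subgroup G) :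
    (conjSubgroup h U : Set G) = (fun x => h * x * h⁻¹) '' U :=
  Subgroup.coe_map _ U

theorem coe_conjSubgroup_eq_preimage (h : G) (U : Subgroup G) :
    (conjSubgroup h U : Set G) = (fun x => h⁻¹ * x * h) ⁻¹' U := by
  ext x
  exact mem_conjSubgroup

variable [TopologicalSpace G] [IsTopologicalGroup G]

theorem isOpen_conjSubgroup (h : G) {U : Subgroup G} (hU : IsOpen (U : Set G)) :
    IsOpen (conjSubgroup h U : Set G) := by
  rw [coe_conjSubgroup_eq_preimage]
  exact hU.preimage (by fun_prop)

theorem isCompact_conjSubgroup (h : G) {U : Subgroup G} (hU : IsCompact (U : Set G)) :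
    IsCompact (conjSubgroup h U : Set G) := by
  rw [coe_conjSubgroup]
  exact hU.image (by fun_prop)

end ConjSubgroup

theorem Monotone.exists_forall_subset_of_finite_iUnion {ι α : Type*} [Preorder ι]
    [IsDirectedOrder ι] [Nonempty ι] {t : ι → Set α} (ht : Monotone t)
    (hfin : (⋃ i, t i).Finite) : ∃ k, ∀ i, t i ⊆ t k := by
  obtain ⟨I, hI, hcover⟩ := Set.finite_subset_iUnion hfin subset_rfl
  obtain ⟨k, hk⟩ := hI.exists_le
  exact ⟨k, fun i => (Set.subset_iUnion t i).trans
    (hcover.trans (Set.iUnion₂_subset fun j hj => ht (hk j hj)))⟩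

section OuterConjInf

variable [Group G]

def outerConjInf (g : G) (U : Subgroup G) (m : ℤ) : Subgroup G :=
  ⨅ (n : ℤ) (_ : 0 ≤ n ∨ n ≤ -m), conjSubgroup (g ^ n) U

variable {g : G} {U : Subgroup G}

theorem mem_outerConjInf {m : ℤ} {x : G} :
    x ∈ outerConjInf g U m ↔ ∀ n : ℤ, 0 ≤ n ∨ n ≤ -m → x ∈ conjSubgroup (g ^ n) U := by
  simp only [outerConjInf, Subgroup.mem_iInf]

theorem outerConjInf_mono : Monotone (outerConjInf g U) := fun m m' hm x hx =>
  mem_outerConjInf.2 fun n hn => mem_outerConjInf.1 hx n (by omega)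

theorem outerConjInf_le (m : ℤ) : outerConjInf g U m ≤ U := fun x hx => by
  simpa [conjSubgroup_one] using mem_outerConjInf.1 hx 0 (Or.inl le_rfl)

theorem zpow_conj_mem_outerConjInf {m t : ℤ} (ht : 0 ≤ t) {x : G}
    (hx : x ∈ outerConjInf g U m) : (g ^ t)⁻¹ * x * g ^ t ∈ outerConjInf g U (m + t) :=
  mem_outerConjInf.2 fun n hn =>
    zpow_conj_mem_conjSubgroup_zpow_iff.2 (mem_outerConjInf.1 hx _ (by omega))

theorem conj_mem_outerConjInf {m : ℤ} {x : G} (hx : x ∈ outerConjInf g U (m + 1))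
    (hx' : x ∈ conjSubgroup g⁻¹ U) : g * x * g⁻¹ ∈ outerConjInf g U m := by
  refine mem_outerConjInf.2 fun n hn => ?_
  have hconj : g * x * g⁻¹ = (g ^ (-1 : ℤ))⁻¹ * x * g ^ (-1 : ℤ) := by simp
  rw [hconj, zpow_conj_mem_conjSubgroup_zpow_iff]
  rcases eq_or_ne n 0 with rfl | hn0
  · simpa using hx'
  · exact mem_outerConjInf.1 hx _ (by omega)

def OuterConjInfStabilizesAt (g : G) (U : Subgroup G) (k : ℤ) : Prop :=
  ∀ m, k ≤ m → (outerConjInf g U m : Set G) ⊆ outerConjInf g U k * conjSubgroup g⁻¹ U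

end OuterConjInf

section Stabilization

variable [Group G] [TopologicalSpace G] [IsTopologicalGroup G] {g : G} {U : Subgroup G}

theorem isCompact_outerConjInf (hU : U.IsCompactOpen) (m : ℤ) :
    IsCompact (outerConjInf g U m : Set G) := by
  refine hU.1.of_isClosed_subset ?_ (outerConjInf_le m)
  simp only [outerConjInf, Subgroup.coe_iInf]
  exact isClosed_iInter fun n => isClosed_iInter fun _ =>
    Subgroup.isClosed_of_isOpen _ (isOpen_conjSubgroup _ hU.2)

theorem exists_outerConjInfStabilizesAt (hU : U.IsCompactOpen) :
    ∃ k : ℤ, 0 ≤ k ∧ OuterConjInfStabilizesAt g U k := by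
  have := QuotientGroup.discreteTopology (isOpen_conjSubgroup g⁻¹ hU.2)
  let T : ℤ → Set (G ⧸ conjSubgroup g⁻¹ U) := fun m => QuotientGroup.mk '' outerConjInf g U m
  have hT : Monotone T := fun m m' hm => Set.image_mono (outerConjInf_mono hm)
  have hfin : (⋃ m, T m).Finite :=
    ((hU.1.image QuotientGroup.continuous_mk).finite_of_discrete).subset
      (Set.iUnion_subset fun m => Set.image_mono (outerConjInf_le m))
  obtain ⟨K, hK⟩ := hT.exists_forall_subset_of_finite_iUnion hfin
  refine ⟨max K 0, le_max_right K 0, fun m _ x hx => ?_⟩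
  obtain ⟨y, hy, hyx⟩ := hT (le_max_left K 0) (hK m ⟨x, hx, rfl⟩)
  exact ⟨y, hy, y⁻¹ * x, QuotientGroup.eq.1 hyx, mul_inv_cancel_left y x⟩

end Stabilization

section Unrolling

variable [Group G] {g : G} {U : Subgroup G} {k : ℤ}

theorem exists_eq_mul_conj_of_mem_outerConjInf
    (hk : OuterConjInfStabilizesAt g U k)
    {m : ℤ} (hm : k ≤ m) {x : G} (hx : x ∈ outerConjInf g U (m + 1)) :
    ∃ y ∈ outerConjInf g U k, ∃ z ∈ outerConjInf g U m, x = y * (g⁻¹ * z * g) := by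
  obtain ⟨y, hy, b, hb, rfl⟩ := hk (m + 1) (by omega) hx
  have hbX : b ∈ outerConjInf g U (m + 1) := by
    simpa using mul_mem (inv_mem (outerConjInf_mono (by omega : k ≤ m + 1) hy)) hx
  exact ⟨y, hy, g * b * g⁻¹, conj_mem_outerConjInf hbX hb, by group⟩

theorem exists_eq_mul_zpow_conj_of_mem_outerConjInf
    (hk : OuterConjInfStabilizesAt g U k)
    {j : ℤ} (hj : 0 ≤ j) {m : ℤ} (hm : k ≤ m) {x : G} (hx : x ∈ outerConjInf g U (m + j)) :
    ∃ a ∈ outerConjInf g U (k + j), ∃ z ∈ outerConjInf g U m,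
      x = a * ((g ^ j)⁻¹ * z * g ^ j) := by
  induction j, hj using Int.leInduction generalizing m with
  | base => exact ⟨1, one_mem _, x, by simpa using hx, by group⟩
  | succ j hj ih =>
    obtain ⟨a, ha, z, hz, rfl⟩ := ih (by omega : k ≤ m + 1) (by rwa [add_right_comm, add_assoc])
    obtain ⟨y, hy, z', hz', rfl⟩ := exists_eq_mul_conj_of_mem_outerConjInf hk hm hz
    refine ⟨a * ((g ^ j)⁻¹ * y * g ^ j), mul_mem (outerConjInf_mono (by omega) ha) ?_, z', hz', ?_⟩
    · exact outerConjInf_mono (by omega) (zpow_conj_mem_outerConjInf hj hy)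
    · rw [zpow_add_one]
      group

end Unrolling

section PreL

variable [Group G] {g : G} {U : Subgroup G}

theorem mem_mul_conjSubgroup_outerConjInf_mul {k : ℤ} (hk₀ : 0 ≤ k)
    (hk : OuterConjInfStabilizesAt g U k)
    {N : ℤ} (hN : k ≤ N) {x : G} (hx : ∀ n : ℤ, N ≤ n ∨ n ≤ -N → x ∈ conjSubgroup (g ^ n) U) :
    x ∈ (U : Set G) * conjSubgroup (g ^ k) (outerConjInf g U (k + k)) * U := by
  have hy : (g ^ N)⁻¹ * x * g ^ N ∈ outerConjInf g U (N + k + (N - k)) :=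
    mem_outerConjInf.2 fun n hn =>
      zpow_conj_mem_conjSubgroup_zpow_iff.2 (hx _ (by omega))
  obtain ⟨a, ha, z, hz, hyz⟩ :=
    exists_eq_mul_zpow_conj_of_mem_outerConjInf hk (by omega) (by omega) hy
  obtain ⟨c, hc, d, hd, rfl⟩ := exists_eq_mul_zpow_conj_of_mem_outerConjInf hk hk₀ hN hz
  have haU : g ^ N * a * (g ^ N)⁻¹ ∈ U := by
    have := mem_conjSubgroup.1 (mem_outerConjInf.1 ha (-N) (Or.inr (by omega)))
    rwa [zpow_neg, inv_inv] at this
  have hcD : g ^ k * c * (g ^ k)⁻¹ ∈ conjSubgroup (g ^ k) (outerConjInf g U (k + k)) :=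
    mem_conjSubgroup.2 (by simpa [mul_assoc] using hc)
  have hx' : x = g ^ N * a * (g ^ N)⁻¹ * (g ^ k * c * (g ^ k)⁻¹) * d := by
    have hNk : g ^ N = g ^ (N - k) * g ^ k := by rw [← zpow_add, sub_add_cancel]
    calc x = g ^ N * ((g ^ N)⁻¹ * x * g ^ N) * (g ^ N)⁻¹ := by group
      _ = _ := by rw [hyz, hNk]; group
  rw [hx']
  exact Set.mul_mem_mul (Set.mul_mem_mul haU hcD) (outerConjInf_le N hd)

variable (g U)

def preL : Subgroup G where
  carrier := {x | {n : ℤ | x ∉ conjSubgroup (g ^ n) U}.Finite}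
  one_mem' := by simp [one_mem]
  mul_mem' {a b} ha hb := (ha.union hb).subset fun n hn =>
    not_and_or.1 fun h => hn (mul_mem h.1 h.2)
  inv_mem' {a} ha := by simpa only [Set.mem_ofPred_eq, inv_mem_iff] using ha

variable {g U}

theorem mem_preL {x : G} : x ∈ preL g U ↔ {n : ℤ | x ∉ conjSubgroup (g ^ n) U}.Finite :=
  Iff.rfl

theorem conjSubgroup_preL : conjSubgroup g (preL g U) = preL g U := by
  ext x
  rw [mem_conjSubgroup, mem_preL, mem_preL]
  have hshift : {n : ℤ | g⁻¹ * x * g ∉ conjSubgroup (g ^ n) U} =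
      (-1 + ·) '' {n : ℤ | x ∉ conjSubgroup (g ^ n) U} := by
    ext n
    simp [Set.image_add_left, ← zpow_conj_mem_conjSubgroup_zpow_iff]
  rw [hshift, Set.finite_image_iff (add_right_injective _).injOn]

theorem exists_forall_mem_conjSubgroup_of_mem_preL {x : G} (hx : x ∈ preL g U) (k : ℤ) :
    ∃ N, k ≤ N ∧ ∀ n : ℤ, N ≤ n ∨ n ≤ -N → x ∈ conjSubgroup (g ^ n) U := by
  obtain ⟨a, ha⟩ := (mem_preL.1 hx).exists_le
  obtain ⟨b, hb⟩ := (mem_preL.1 hx).exists_ge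
  refine ⟨max k (max (a + 1) (1 - b)), le_max_left _ _, fun n hn => ?_⟩
  by_contra h
  have := ha n h
  have := hb n h
  omega

theorem isCompact_closure_preL [TopologicalSpace G] [IsTopologicalGroup G]
    (hU : U.IsCompactOpen) : IsCompact (closure (preL g U : Set G)) := by
  obtain ⟨k, hk₀, hk⟩ := exists_outerConjInfStabilizesAt (g := g) hU
  have hD := isCompact_conjSubgroup (g ^ k) (isCompact_outerConjInf (g := g) hU (k + k))
  refine ((hU.1.mul hD).mul hU.1).closure_of_subset fun x hx => ?_
  obtain ⟨N, hN, hxN⟩ := exists_forall_mem_conjSubgroup_of_mem_preL hx k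
  exact mem_mul_conjSubgroup_outerConjInf_mul hk₀ hk hN hxN

end PreL

theorem preL_subgroup_normalised_relatively_compact_general
    [Group G] [TopologicalSpace G] [IsTopologicalGroup G]
    (g : G) (U : Subgroup G) (hU : U.IsCompactOpen) :
    ∃ H : Subgroup G,
      (H : Set G) = {x : G | {n : ℤ | x ∉ conjSubgroup (g ^ n) U}.Finite} ∧
      conjSubgroup g H = H ∧
      IsCompact (closure {x : G | {n : ℤ | x ∉ conjSubgroup (g ^ n) U}.Finite}) :=
  ⟨preL g U, rfl, conjSubgroup_preL, isCompact_closure_preL hU⟩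

/-- `L̃_U = {x : x ∈ gⁿUg⁻ⁿ for all but finitely many n ∈ ℤ}` is a subgroup
normalised by `g` which is relatively compact. -/
theorem preL_subgroup_normalised_relatively_compact
    [Group G] [TopologicalSpace G] [IsTopologicalGroup G] [LocallyCompactSpace G] [T2Space G]
    [TotallyDisconnectedSpace G]
    (g : G) (U : Subgroup G) (hU : U.IsCompactOpen) :
    ∃ H : Subgroup G,
      (H : Set G) = {x : G | {n : ℤ | x ∉ conjSubgroup (g ^ n) U}.Finite} ∧
      conjSubgroup g H = H ∧
      IsCompact (closure {x : G | {n : ℤ | x ∉ conjSubgroup (g ^ n) U}.Finite}) :=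
  preL_subgroup_normalised_relatively_compact_general g U hU
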